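/- arXiv:2402.04619 — 8 statements merged into one kernel-verified Lean document; each statement's English description precedes it below -/
import Mathlib

section
/- Let r1, k1, r2, k2, p, b, e > 0 and m ∈ (0,1), and set c = e·p·(1−m)·k1/(1 + b·(1−m)·k1) and K = (k2/r2)·(r2 + c). Let y : ℝ → ℝ be differentiable on [0,∞) with y(t) > 0 and y'(t) ≤ r2·y(t)·(1 − y(t)/k2) + c·y(t) for all t ≥ 0. If y(0) ≤ K, then y(t) ≤ K for all t ≥ 0. -/
/-!
Completing the square, `r2 y (1 - y/k2) + c y = (r2/k2) y (K - y)`, so the right-hand side of the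
differential inequality is negative wherever `y > K` (and `y > 0`). Hence `y` can never reach a
level `K + ε` from below, and letting `ε → 0` gives `y ≤ K`.
-/

theorem le_of_hasDerivAt_neg_of_lt {y y' : ℝ → ℝ} {a K : ℝ}
    (hderiv : ∀ t, a ≤ t → HasDerivAt y (y' t) t)
    (hneg : ∀ t, a ≤ t → K < y t → y' t < 0) (hinit : y a ≤ K) :
    ∀ t, a ≤ t → y t ≤ K := by
  intro t ht
  refine le_of_forall_pos_le_add fun ε hε => ?_
  exact image_le_of_deriv_right_lt_deriv_boundary (f := y) (B := fun _ => K + ε)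
    (fun x hx => (hderiv x hx.1).continuousAt.continuousWithinAt)
    (fun x hx => (hderiv x hx.1).hasDerivWithinAt) (by linarith)
    (fun x => hasDerivAt_const x (K + ε))
    (fun x hx hyx => hneg x hx.1 (by rw [hyx]; linarith)) ⟨ht, le_rfl⟩

theorem logistic_add_linear_eq {r k c v : ℝ} (hr : r ≠ 0) (hk : k ≠ 0) :
    r * v * (1 - v / k) + c * v = r / k * v * (k / r * (r + c) - v) := by
  field_simp
  ring

theorem logistic_add_linear_neg {r k c v : ℝ} (hr : 0 < r) (hk : 0 < k) (hv : 0 < v)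
    (hvK : k / r * (r + c) < v) : r * v * (1 - v / k) + c * v < 0 := by
  rw [logistic_add_linear_eq hr.ne' hk.ne']
  have : 0 < r / k * v := by positivity
  nlinarith

theorem stmt_2_general (r2 k2 : ℝ)
    (hr2 : 0 < r2) (hk2 : 0 < k2)
    (c K : ℝ)
    (hK : K = (k2 / r2) * (r2 + c))
    (y y' : ℝ → ℝ)
    (hderiv : ∀ t : ℝ, 0 ≤ t → HasDerivAt y (y' t) t)
    (hpos : ∀ t : ℝ, 0 ≤ t → 0 < y t)
    (hineq : ∀ t : ℝ, 0 ≤ t → y' t ≤ r2 * y t * (1 - y t / k2) + c * y t)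
    (hinit : y 0 ≤ K) :
    ∀ t : ℝ, 0 ≤ t → y t ≤ K := by
  subst hK
  refine le_of_hasDerivAt_neg_of_lt hderiv (fun t ht hyt => ?_) hinit
  exact (hineq t ht).trans_lt (logistic_add_linear_neg hr2 hk2 (hpos t ht) hyt)

/-- Predator boundedness in the non-harvesting regime: with
`c = e*p*(1-m)*k1 / (1 + b*(1-m)*k1)` and `K = (k2/r2) * (r2 + c)`, if
`y' ≤ r2*y*(1 - y/k2) + c*y` on `[0,∞)` with `y > 0` and `y 0 ≤ K`,
then `y t ≤ K` for all `t ≥ 0`. -/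
theorem stmt_2 (r1 k1 r2 k2 p b e m : ℝ)
    (hr1 : 0 < r1) (hk1 : 0 < k1) (hr2 : 0 < r2) (hk2 : 0 < k2)
    (hp : 0 < p) (hb : 0 < b) (he : 0 < e) (hm : m ∈ Set.Ioo (0 : ℝ) 1)
    (c K : ℝ)
    (hc : c = e * p * (1 - m) * k1 / (1 + b * (1 - m) * k1))
    (hK : K = (k2 / r2) * (r2 + c))
    (y y' : ℝ → ℝ)
    (hderiv : ∀ t : ℝ, 0 ≤ t → HasDerivAt y (y' t) t)
    (hpos : ∀ t : ℝ, 0 ≤ t → 0 < y t)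
    (hineq : ∀ t : ℝ, 0 ≤ t → y' t ≤ r2 * y t * (1 - y t / k2) + c * y t)
    (hinit : y 0 ≤ K) :
    ∀ t : ℝ, 0 ≤ t → y t ≤ K :=
  stmt_2_general r2 k2 hr2 hk2 c K hK y y' hderiv hpos hineq hinit
end

section
/- Let r1, k1, r2, k2, p, b, q1, q2, E, e > 0, m ∈ (0,1), ψ ∈ {0,1}, and define α0 = k1·k2·p·(1−m)·(r2 − ψ·q2·E) − k1·r2·(r1 − ψ·q1·E), α1 = r1·r2 − 2·k1·r2·(r1 − ψ·q1·E)·b·(1−m) + k1·k2·p·(1−m)²·(b·(r2 − ψ·q2·E) + e·p), α2 = 2·r1·r2·b·(1−m) − k1·r2·b²·(1−m)²·(r1 − ψ·q1·E), α3 = r1·r2·b²·(1−m)². Suppose α0 < 0 and either (α1 < 0 and α2 < 0), or (α1 < 0 and α2 > 0), or (α1 > 0 and α2 > 0), so that the cubic α3·x³ + α2·x² + α1·x + α0 has a unique positive root x*, and suppose furthermore r1 > ψ·q1·E + r1·x*/k1. Then there exists exactly one pair (x, y) with x > 0 and y > 0 satisfying both r1·(1 − x/k1) − p·(1−m)·y/(1+b·(1−m)·x)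 = ψ·q1·E and r2·(1 − y/k2) + e·p·(1−m)·x/(1+b·(1−m)·x) = ψ·q2·E; namely x = x* and y = (1/(p·(1−m)))·(r1 − ψ·q1·E − r1·x*/k1)·(1 + b·(1−m)·x*). -/
/-!
Solving the prey equation for `y` gives the prey nullcline `y = N(x)`; substituting it into the
predator equation and clearing the (positive) denominators turns that equation into the cubic
`α3 x³ + α2 x² + α1 x + α0 = 0`. The sign conditions leave this cubic at most one positive root,
so `x = xs`, and then `y = N(xs) = ys`, which is positive exactly when `r1 > ψ q1 E + r1 xs / k1`.
-/

/-- Eliminating `a2` (resp. `a1`) between the equations of two positive roots `u ≠ v` leaves a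
factor that the sign conditions make strictly negative. -/
theorem cubic_pos_roots_subsingleton {a3 a2 a1 a0 : ℝ} (h3 : 0 ≤ a3) (h0 : a0 < 0)
    (hs : a1 ≤ 0 ∨ 0 ≤ a2) :
    {x : ℝ | 0 < x ∧ a3 * x ^ 3 + a2 * x ^ 2 + a1 * x + a0 = 0}.Subsingleton := by
  rintro u ⟨hu, hgu⟩ v ⟨hv, hgv⟩
  have huv := mul_pos hu hv
  rcases hs with h1 | h2
  · have key : (v - u) * (a1 * u * v + a0 * (u + v) - a3 * u ^ 2 * v ^ 2) = 0 := by
      linear_combination v ^ 2 * hgu - u ^ 2 * hgv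
    have hneg : a1 * u * v + a0 * (u + v) - a3 * u ^ 2 * v ^ 2 < 0 := by
      nlinarith [mul_nonneg h3 (sq_nonneg (u * v))]
    linarith [(mul_eq_zero.mp key).resolve_right hneg.ne]
  · have key : (v - u) * (a0 - a3 * u * v * (u + v) - a2 * u * v) = 0 := by
      linear_combination v * hgu - u * hgv
    have hneg : a0 - a3 * u * v * (u + v) - a2 * u * v < 0 := by
      nlinarith [mul_nonneg (mul_nonneg h3 huv.le) (add_pos hu hv).le]
    linarith [(mul_eq_zero.mp key).resolve_right hneg.ne]

section Equilibrium

variable (r1 k1 r2 k2 a β e h1 h2 : ℝ)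

/-- In the model `a = p (1 - m)`, `β = b (1 - m)`, `h1 = ψ q1 E` and `h2 = ψ q2 E`. -/
noncomputable def preyNullcline (x : ℝ) : ℝ :=
  (1 / a) * (r1 - h1 - r1 * x / k1) * (1 + β * x)

def equilibriumCubic (x : ℝ) : ℝ :=
  r1 * r2 * β ^ 2 * x ^ 3 + (2 * r1 * r2 * β - k1 * r2 * β ^ 2 * (r1 - h1)) * x ^ 2
    + (r1 * r2 - 2 * k1 * r2 * (r1 - h1) * β + k1 * k2 * a * (β * (r2 - h2) + e * a)) * x
    + (k1 * k2 * a * (r2 - h2) - k1 * r2 * (r1 - h1))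

variable {r1 k1 r2 k2 a β e h1 h2}

theorem prey_eq_iff_eq_preyNullcline {x y : ℝ} (ha : a ≠ 0) (hD : 1 + β * x ≠ 0) :
    r1 * (1 - x / k1) - a * y / (1 + β * x) = h1 ↔ y = preyNullcline r1 k1 a β h1 x := by
  rw [sub_eq_iff_eq_add', ← sub_eq_iff_eq_add, eq_div_iff hD, eq_comm, mul_comm a,
    ← eq_div_iff ha, preyNullcline]
  ring_nf

theorem equilibriumCubic_eq {x : ℝ} (hk1 : k1 ≠ 0) (hk2 : k2 ≠ 0) (ha : a ≠ 0)
    (hD : 1 + β * x ≠ 0) :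
    equilibriumCubic r1 k1 r2 k2 a β e h1 h2 x = k1 * k2 * a * (1 + β * x) *
      (r2 * (1 - preyNullcline r1 k1 a β h1 x / k2) + e * a * x / (1 + β * x) - h2) := by
  unfold equilibriumCubic preyNullcline
  field_simp
  ring

theorem predator_eq_iff_equilibriumCubic_eq_zero {x : ℝ} (hk1 : k1 ≠ 0) (hk2 : k2 ≠ 0)
    (ha : a ≠ 0) (hD : 1 + β * x ≠ 0) :
    r2 * (1 - preyNullcline r1 k1 a β h1 x / k2) + e * a * x / (1 + β * x) = h2 ↔
      equilibriumCubic r1 k1 r2 k2 a β e h1 h2 x = 0 := by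
  rw [equilibriumCubic_eq hk1 hk2 ha hD, mul_eq_zero, sub_eq_zero]
  simp [hk1, hk2, ha, hD]

end Equilibrium

theorem stmt_5_general (r1 k1 r2 k2 p b q1 q2 E e m ψ : ℝ)
    (hr1 : 0 < r1) (hk1 : 0 < k1) (hr2 : 0 < r2) (hk2 : 0 < k2)
    (hp : 0 < p) (hb : 0 < b)
    (hm : m ∈ Set.Ioo (0 : ℝ) 1)
    (α0 α1 α2 α3 : ℝ)
    (hα0 : α0 = k1 * k2 * p * (1 - m) * (r2 - ψ * q2 * E) - k1 * r2 * (r1 - ψ * q1 * E))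
    (hα1 : α1 = r1 * r2 - 2 * k1 * r2 * (r1 - ψ * q1 * E) * b * (1 - m)
        + k1 * k2 * p * (1 - m) ^ 2 * (b * (r2 - ψ * q2 * E) + e * p))
    (hα2 : α2 = 2 * r1 * r2 * b * (1 - m) - k1 * r2 * b ^ 2 * (1 - m) ^ 2 * (r1 - ψ * q1 * E))
    (hα3 : α3 = r1 * r2 * b ^ 2 * (1 - m) ^ 2)
    (hα0neg : α0 < 0)
    (hsigns : (α1 < 0 ∧ α2 < 0) ∨ (α1 < 0 ∧ 0 < α2) ∨ (0 < α1 ∧ 0 < α2))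
    (xs ys : ℝ)
    (hxs : 0 < xs ∧ α3 * xs ^ 3 + α2 * xs ^ 2 + α1 * xs + α0 = 0)
    (hys : ys = (1 / (p * (1 - m))) * (r1 - ψ * q1 * E - r1 * xs / k1) * (1 + b * (1 - m) * xs))
    (hgrowth : r1 > ψ * q1 * E + r1 * xs / k1) :
    (0 < xs ∧ 0 < ys ∧
      r1 * (1 - xs / k1) - p * (1 - m) * ys / (1 + b * (1 - m) * xs) = ψ * q1 * E ∧
      r2 * (1 - ys / k2) + e * p * (1 - m) * xs / (1 + b * (1 - m) * xs) = ψ * q2 * E) ∧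
    (∀ x y : ℝ, 0 < x → 0 < y →
      r1 * (1 - x / k1) - p * (1 - m) * y / (1 + b * (1 - m) * x) = ψ * q1 * E →
      r2 * (1 - y / k2) + e * p * (1 - m) * x / (1 + b * (1 - m) * x) = ψ * q2 * E →
      x = xs ∧ y = ys) := by
  obtain ⟨hxs0, hcubic_xs⟩ := hxs
  have ha : 0 < p * (1 - m) := mul_pos hp (sub_pos.mpr hm.2)
  have hD : ∀ x, 0 < x → 0 < 1 + b * (1 - m) * x := fun x hx ↦
    add_pos one_pos (mul_pos (mul_pos hb (sub_pos.mpr hm.2)) hx)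
  have hcubic : ∀ x, α3 * x ^ 3 + α2 * x ^ 2 + α1 * x + α0 = equilibriumCubic r1 k1 r2 k2
      (p * (1 - m)) (b * (1 - m)) e (ψ * q1 * E) (ψ * q2 * E) x := fun x ↦ by
    unfold equilibriumCubic; subst hα0 hα1 hα2 hα3; ring
  have hsub := cubic_pos_roots_subsingleton (a3 := α3) (by rw [hα3]; positivity) hα0neg
    (by obtain ⟨h, -⟩ | ⟨h, -⟩ | ⟨-, h⟩ := hsigns; exacts [.inl h.le, .inl h.le, .inr h.le])
  simp only [mul_assoc e p (1 - m)]
  refine ⟨⟨hxs0, ?_, ?_, ?_⟩, fun x y hx _ hprey hpred ↦ ?_⟩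
  · rw [hys]
    have : 0 < r1 - ψ * q1 * E - r1 * xs / k1 := by linarith
    have := hD xs hxs0
    positivity
  · exact (prey_eq_iff_eq_preyNullcline ha.ne' (hD xs hxs0).ne').2 hys
  · rw [hys]
    exact (predator_eq_iff_equilibriumCubic_eq_zero hk1.ne' hk2.ne' ha.ne' (hD xs hxs0).ne').2
      (hcubic xs ▸ hcubic_xs)
  · rw [prey_eq_iff_eq_preyNullcline ha.ne' (hD x hx).ne'] at hprey
    subst hprey
    rw [predator_eq_iff_equilibriumCubic_eq_zero hk1.ne' hk2.ne' ha.ne' (hD x hx).ne',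
      ← hcubic] at hpred
    obtain rfl : x = xs := hsub ⟨hx, hpred⟩ ⟨hxs0, hcubic_xs⟩
    exact ⟨rfl, hys.symm⟩

/-- Existence and uniqueness of the interior equilibrium (Theorem 3.1):
if the cubic `α3*x^3 + α2*x^2 + α1*x + α0` has the stated coefficient signs,
`xs` is its (unique) positive root and `r1 > ψ*q1*E + r1*xs/k1`, then the
equilibrium equations have exactly one positive solution, namely
`(xs, ys)` with `ys = (1/(p*(1-m))) * (r1 - ψ*q1*E - r1*xs/k1) * (1 + b*(1-m)*xs)`. -/
theorem stmt_5 (r1 k1 r2 k2 p b q1 q2 E e m ψ : ℝ)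
    (hr1 : 0 < r1) (hk1 : 0 < k1) (hr2 : 0 < r2) (hk2 : 0 < k2)
    (hp : 0 < p) (hb : 0 < b) (hq1 : 0 < q1) (hq2 : 0 < q2)
    (hE : 0 < E) (he : 0 < e) (hm : m ∈ Set.Ioo (0 : ℝ) 1)
    (hψ : ψ = 0 ∨ ψ = 1)
    (α0 α1 α2 α3 : ℝ)
    (hα0 : α0 = k1 * k2 * p * (1 - m) * (r2 - ψ * q2 * E) - k1 * r2 * (r1 - ψ * q1 * E))
    (hα1 : α1 = r1 * r2 - 2 * k1 * r2 * (r1 - ψ * q1 * E) * b * (1 - m)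
        + k1 * k2 * p * (1 - m) ^ 2 * (b * (r2 - ψ * q2 * E) + e * p))
    (hα2 : α2 = 2 * r1 * r2 * b * (1 - m) - k1 * r2 * b ^ 2 * (1 - m) ^ 2 * (r1 - ψ * q1 * E))
    (hα3 : α3 = r1 * r2 * b ^ 2 * (1 - m) ^ 2)
    (hα0neg : α0 < 0)
    (hsigns : (α1 < 0 ∧ α2 < 0) ∨ (α1 < 0 ∧ 0 < α2) ∨ (0 < α1 ∧ 0 < α2))
    (xs ys : ℝ)
    (hxs : 0 < xs ∧ α3 * xs ^ 3 + α2 * xs ^ 2 + α1 * xs + α0 = 0)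
    (hys : ys = (1 / (p * (1 - m))) * (r1 - ψ * q1 * E - r1 * xs / k1) * (1 + b * (1 - m) * xs))
    (hgrowth : r1 > ψ * q1 * E + r1 * xs / k1) :
    (0 < xs ∧ 0 < ys ∧
      r1 * (1 - xs / k1) - p * (1 - m) * ys / (1 + b * (1 - m) * xs) = ψ * q1 * E ∧
      r2 * (1 - ys / k2) + e * p * (1 - m) * xs / (1 + b * (1 - m) * xs) = ψ * q2 * E) ∧
    (∀ x y : ℝ, 0 < x → 0 < y →
      r1 * (1 - x / k1) - p * (1 - m) * y / (1 + b * (1 - m) * x) = ψ * q1 * E →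
      r2 * (1 - y / k2) + e * p * (1 - m) * x / (1 + b * (1 - m) * x) = ψ * q2 * E →
      x = xs ∧ y = ys) :=
  stmt_5_general r1 k1 r2 k2 p b q1 q2 E e m ψ hr1 hk1 hr2 hk2 hp hb hm α0 α1 α2 α3 hα0 hα1 hα2 hα3
    hα0neg hsigns xs ys hxs hys hgrowth
end

section
/- Let r1, k1, r2, k2, p, b, e > 0 and m ∈ (0,1), and let (x*, y*) with x* > 0 and y* > 0 satisfy r1·(1−x*/k1) − p·(1−m)·y*/(1+b·(1−m)·x*) = 0 and r2·(1−y*/k2) + e·p·(1−m)·x*/(1+b·(1−m)·x*) = 0 + 0 (i.e. (x*,y*) is an interior equilibrium of subsystem I). If r1/k1 > b·p·(1−m)²·y*/(1+b·(1−m)·x*)², then the 2×2 real matrix J with entries J₁₁ = −x*·(r1/k1 − b·p·(1−m)²·y*/(1+b·(1−m)·x*)²), J₁₂ = −p·(1−m)·x*/(1+b·(1−m)·x*), J₂₁ = e·p·(1−m)·x*/(1+b·(1−m)·x*)², J₂₂ = −(r2/k2)·y* has negative trace and positive determinant, and consequently every complex eigenvalue of J has strictly negative real part. -/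
open Matrix

lemma quad_root_neg_re (t d : ℝ) (ht : t < 0) (hd : 0 < d) (μ : ℂ)
    (h : μ ^ 2 - (t : ℂ) * μ + (d : ℂ) = 0) : μ.re < 0 := by
  have hre := congrArg Complex.re h
  have him := congrArg Complex.im h
  simp only [pow_two, Complex.add_re, Complex.add_im, Complex.sub_re, Complex.sub_im,
    Complex.mul_re, Complex.mul_im, Complex.ofReal_re, Complex.ofReal_im,
    Complex.zero_re, Complex.zero_im] at hre him
  rcases eq_or_ne μ.im 0 with h0 | h0
  · rw [h0] at hre
    nlinarith [sq_nonneg μ.re]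
  · have h1 : μ.im * (2 * μ.re - t) = 0 := by nlinarith
    have h2 : 2 * μ.re - t = 0 := by
      rcases mul_eq_zero.mp h1 with h' | h'
      · exact absurd h' h0
      · exact h'
    linarith

/-- Local asymptotic stability of the interior equilibrium of subsystem I
(Theorem 3.2): under the stated condition the Jacobian has negative trace,
positive determinant, and all its (complex) eigenvalues have negative real part. -/
theorem stmt_6 (r1 k1 r2 k2 p b e m xs ys : ℝ)
    (hr1 : 0 < r1) (hk1 : 0 < k1) (hr2 : 0 < r2) (hk2 : 0 < k2)
    (hp : 0 < p) (hb : 0 < b) (he : 0 < e) (hm : m ∈ Set.Ioo (0 : ℝ) 1)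
    (hxs : 0 < xs) (hys : 0 < ys)
    (heq1 : r1 * (1 - xs / k1) - p * (1 - m) * ys / (1 + b * (1 - m) * xs) = 0)
    (heq2 : r2 * (1 - ys / k2) + e * p * (1 - m) * xs / (1 + b * (1 - m) * xs) = 0)
    (hcond : r1 / k1 > b * p * (1 - m) ^ 2 * ys / (1 + b * (1 - m) * xs) ^ 2)
    (J : Matrix (Fin 2) (Fin 2) ℝ)
    (hJ : J = !![-(xs * (r1 / k1 - b * p * (1 - m) ^ 2 * ys / (1 + b * (1 - m) * xs) ^ 2)),
                 -(p * (1 - m) * xs / (1 + b * (1 - m) * xs));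
                 e * p * (1 - m) * xs / (1 + b * (1 - m) * xs) ^ 2,
                 -(r2 / k2 * ys)]) :
    J.trace < 0 ∧ 0 < J.det ∧
      ∀ μ : ℂ, μ ∈ spectrum ℂ (J.map (Complex.ofReal : ℝ → ℂ)) → μ.re < 0 := by
  have hm1 : 0 < 1 - m := by linarith [hm.2]
  have hden : 0 < 1 + b * (1 - m) * xs := by positivity
  have hA : 0 < xs * (r1 / k1 - b * p * (1 - m) ^ 2 * ys / (1 + b * (1 - m) * xs) ^ 2) := by
    have := sub_pos.mpr hcond
    positivity
  have hB : 0 < p * (1 - m) * xs / (1 + b * (1 - m) * xs) := by positivity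
  have hC : 0 < e * p * (1 - m) * xs / (1 + b * (1 - m) * xs) ^ 2 := by positivity
  have hD : 0 < r2 / k2 * ys := by positivity
  have htr : J.trace < 0 := by
    rw [hJ]
    simp [Matrix.trace_fin_two]
    linarith
  have hdet : 0 < J.det := by
    rw [hJ]
    simp [Matrix.det_fin_two]
    nlinarith
  refine ⟨htr, hdet, fun μ hμ => ?_⟩
  apply quad_root_neg_re J.trace J.det htr hdet
  rw [spectrum.mem_iff, Matrix.isUnit_iff_isUnit_det, isUnit_iff_ne_zero, not_not] at hμ
  have hquad : μ ^ 2 - (J.trace : ℂ) * μ + (J.det : ℂ) = 0 := by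
    rw [← hμ]
    simp [Matrix.det_fin_two, Matrix.trace_fin_two, Matrix.algebraMap_matrix_apply,
      Matrix.map_apply]
    ring
  exact hquad
end

section
/- Let r1, k1, r2, k2, p, b, e > 0 and m ∈ (0,1), and let (x*, y*) with x*, y* > 0 satisfy r1·(1−x*/k1) = p·(1−m)·y*/(1+b·(1−m)·x*) and r2·(1−y*/k2) = −e·p·(1−m)·x*/(1+b·(1−m)·x*). Then for all x > 0 and y > 0: e·(x − x*)·(r1·(1−x/k1) − p·(1−m)·y/(1+b·(1−m)·x)) + (1+b·(1−m)·x*)·(y − y*)·(r2·(1−y/k2) + e·p·(1−m)·x/(1+b·(1−m)·x)) = −e·(r1/k1 − b·p·(1−m)²·y*/((1+b·(1−m)·x*)·(1+b·(1−m)·x)))·(x − x*)² − (r2/k2)·(1+b·(1−m)·x*)·(y − y*)². -/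
/-!
Subtracting the equilibrium equations from the two components of the vector field leaves
`-(r1/k1)(x - x*)` and `-(r2/k2)(y - y*)` plus differences of the Holling type II terms, and
these differences factor through `x - x*` and `y - y*` over the product of the two
denominators. With the weights `e` and `1 + b(1-m)x*` of the Lyapunov function the mixed terms
`(x - x*)(y - y*)` cancel, leaving the quadratic form.
-/

section HollingTypeII

variable {c x xs : ℝ}

theorem div_one_add_mul_sub_div_one_add_mul (y ys : ℝ)
    (hD : 1 + c * x ≠ 0) (hDs : 1 + c * xs ≠ 0) :
    y / (1 + c * x) - ys / (1 + c * xs)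
      = (y - ys) / (1 + c * x) - c * ys * (x - xs) / ((1 + c * x) * (1 + c * xs)) := by
  field_simp [hD, hDs]
  ring

theorem div_one_add_mul_sub_div_one_add_mul_self
    (hD : 1 + c * x ≠ 0) (hDs : 1 + c * xs ≠ 0) :
    x / (1 + c * x) - xs / (1 + c * xs) = (x - xs) / ((1 + c * x) * (1 + c * xs)) := by
  rw [div_sub_div _ _ hD hDs]
  ring

end HollingTypeII

theorem lyapunov_derivative_eq {r1 k1 r2 k2 q c e xs ys : ℝ} (x y : ℝ)
    (hD : 1 + c * x ≠ 0) (hDs : 1 + c * xs ≠ 0)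
    (heq1 : r1 * (1 - xs / k1) = q * ys / (1 + c * xs))
    (heq2 : r2 * (1 - ys / k2) = -(e * q * xs / (1 + c * xs))) :
    e * (x - xs) * (r1 * (1 - x / k1) - q * y / (1 + c * x))
        + (1 + c * xs) * (y - ys) * (r2 * (1 - y / k2) + e * q * x / (1 + c * x))
      = -(e * (r1 / k1 - c * q * ys / ((1 + c * xs) * (1 + c * x))) * (x - xs) ^ 2)
        - r2 / k2 * (1 + c * xs) * (y - ys) ^ 2 := by
  have hprey : r1 * (1 - x / k1) - q * y / (1 + c * x)
      = -(r1 / k1 * (x - xs)) - q * (y - ys) / (1 + c * x)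
        + c * q * ys * (x - xs) / ((1 + c * x) * (1 + c * xs)) := by
    linear_combination heq1 - q * div_one_add_mul_sub_div_one_add_mul y ys hD hDs
  have hpredator : r2 * (1 - y / k2) + e * q * x / (1 + c * x)
      = -(r2 / k2 * (y - ys)) + e * q * (x - xs) / ((1 + c * x) * (1 + c * xs)) := by
    linear_combination heq2 + e * q * div_one_add_mul_sub_div_one_add_mul_self hD hDs
  have hcancel : (1 + c * xs) / ((1 + c * x) * (1 + c * xs)) = (1 + c * x)⁻¹ :=
    div_mul_cancel_right₀ hDs _
  rw [hprey, hpredator]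
  linear_combination e * q * (x - xs) * (y - ys) * hcancel

theorem stmt_8_general (r1 k1 r2 k2 p b e m xs ys : ℝ)
    (hb : 0 < b) (hm : m ∈ Set.Ioo (0 : ℝ) 1)
    (hxs : 0 < xs)
    (heq1 : r1 * (1 - xs / k1) = p * (1 - m) * ys / (1 + b * (1 - m) * xs))
    (heq2 : r2 * (1 - ys / k2) = -(e * p * (1 - m) * xs / (1 + b * (1 - m) * xs))) :
    ∀ x y : ℝ, 0 < x → 0 < y →
      e * (x - xs) * (r1 * (1 - x / k1) - p * (1 - m) * y / (1 + b * (1 - m) * x))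
        + (1 + b * (1 - m) * xs) * (y - ys) *
            (r2 * (1 - y / k2) + e * p * (1 - m) * x / (1 + b * (1 - m) * x))
      = -(e * (r1 / k1 - b * p * (1 - m) ^ 2 * ys /
            ((1 + b * (1 - m) * xs) * (1 + b * (1 - m) * x))) * (x - xs) ^ 2)
        - r2 / k2 * (1 + b * (1 - m) * xs) * (y - ys) ^ 2 := by
  intro x y hx _
  have hc : 0 < b * (1 - m) := mul_pos hb (sub_pos.2 hm.2)
  have key := lyapunov_derivative_eq (r2 := r2) (k2 := k2) (q := p * (1 - m)) (e := e) x y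
    (by positivity) (by positivity) heq1 (by linear_combination heq2)
  linear_combination key

/-- Algebraic identity for the derivative of the Lyapunov function along
subsystem I: at the interior equilibrium `(xs, ys)` of the non-harvesting
subsystem, for all `x, y > 0` the displayed identity holds. -/
theorem stmt_8 (r1 k1 r2 k2 p b e m xs ys : ℝ)
    (hr1 : 0 < r1) (hk1 : 0 < k1) (hr2 : 0 < r2) (hk2 : 0 < k2)
    (hp : 0 < p) (hb : 0 < b) (he : 0 < e) (hm : m ∈ Set.Ioo (0 : ℝ) 1)
    (hxs : 0 < xs) (hys : 0 < ys)
    (heq1 : r1 * (1 - xs / k1) = p * (1 - m) * ys / (1 + b * (1 - m) * xs))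
    (heq2 : r2 * (1 - ys / k2) = -(e * p * (1 - m) * xs / (1 + b * (1 - m) * xs))) :
    ∀ x y : ℝ, 0 < x → 0 < y →
      e * (x - xs) * (r1 * (1 - x / k1) - p * (1 - m) * y / (1 + b * (1 - m) * x))
        + (1 + b * (1 - m) * xs) * (y - ys) *
            (r2 * (1 - y / k2) + e * p * (1 - m) * x / (1 + b * (1 - m) * x))
      = -(e * (r1 / k1 - b * p * (1 - m) ^ 2 * ys /
            ((1 + b * (1 - m) * xs) * (1 + b * (1 - m) * x))) * (x - xs) ^ 2)
        - r2 / k2 * (1 + b * (1 - m) * xs) * (y - ys) ^ 2 :=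
  stmt_8_general r1 k1 r2 k2 p b e m xs ys hb hm hxs heq1 heq2
end

section
/- Let r1, k1, r2, k2, p, b, e > 0, m ∈ (0,1), and let (x*, y*) with x*, y* > 0 satisfy r1·(1−x*/k1) = p·(1−m)·y*/(1+b·(1−m)·x*) and r2·(1−y*/k2) = −e·p·(1−m)·x*/(1+b·(1−m)·x*). If r1/k1 > b·p·(1−m)²·y*/(1+b·(1−m)·x*), then for all x ≥ 0 (x > 0) and y > 0: e·(x − x*)·(r1·(1−x/k1) − p·(1−m)·y/(1+b·(1−m)·x)) + (1+b·(1−m)·x*)·(y − y*)·(r2·(1−y/k2) + e·p·(1−m)·x/(1+b·(1−m)·x)) ≤ 0, with equality if and only if x = x* and y = y*. -/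
/-- Negative semi-definiteness of the Lyapunov derivative along subsystem I
(key step of Theorem 3.3): under `r1/k1 > b*p*(1-m)^2*ys/(1+b*(1-m)*xs)`,
the derivative of `V` along solutions is `≤ 0` and vanishes exactly at `(xs, ys)`. -/
theorem stmt_9 (r1 k1 r2 k2 p b e m xs ys : ℝ)
    (hr1 : 0 < r1) (hk1 : 0 < k1) (hr2 : 0 < r2) (hk2 : 0 < k2)
    (hp : 0 < p) (hb : 0 < b) (he : 0 < e) (hm : m ∈ Set.Ioo (0 : ℝ) 1)
    (hxs : 0 < xs) (hys : 0 < ys)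
    (heq1 : r1 * (1 - xs / k1) = p * (1 - m) * ys / (1 + b * (1 - m) * xs))
    (heq2 : r2 * (1 - ys / k2) = -(e * p * (1 - m) * xs / (1 + b * (1 - m) * xs)))
    (hcond : r1 / k1 > b * p * (1 - m) ^ 2 * ys / (1 + b * (1 - m) * xs)) :
    ∀ x y : ℝ, 0 < x → 0 < y →
      (e * (x - xs) * (r1 * (1 - x / k1) - p * (1 - m) * y / (1 + b * (1 - m) * x))
        + (1 + b * (1 - m) * xs) * (y - ys) *
            (r2 * (1 - y / k2) + e * p * (1 - m) * x / (1 + b * (1 - m) * x)) ≤ 0)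
      ∧ (e * (x - xs) * (r1 * (1 - x / k1) - p * (1 - m) * y / (1 + b * (1 - m) * x))
        + (1 + b * (1 - m) * xs) * (y - ys) *
            (r2 * (1 - y / k2) + e * p * (1 - m) * x / (1 + b * (1 - m) * x)) = 0
          ↔ x = xs ∧ y = ys) := by
  obtain ⟨hm0, hm1⟩ := hm
  intro x y hx hy
  have hα : 0 < 1 - m := by linarith
  have hA : 0 < 1 + b * (1 - m) * xs := by positivity
  have hAx : 0 < 1 + b * (1 - m) * x := by positivity
  have hAx1 : 1 + b * (1 - m) * xs < (1 + b * (1 - m) * xs) * (1 + b * (1 - m) * x) := by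
    have h1 : 1 < 1 + b * (1 - m) * x := by nlinarith [mul_pos (mul_pos hb hα) hx]
    calc 1 + b * (1 - m) * xs = (1 + b * (1 - m) * xs) * 1 := by ring
      _ < (1 + b * (1 - m) * xs) * (1 + b * (1 - m) * x) :=
          mul_lt_mul_of_pos_left h1 hA
  set c : ℝ := r1 / k1
      - b * p * (1 - m) ^ 2 * ys / ((1 + b * (1 - m) * xs) * (1 + b * (1 - m) * x)) with hc_def
  have hc : 0 < c := by
    have h1 : b * p * (1 - m) ^ 2 * ys / ((1 + b * (1 - m) * xs) * (1 + b * (1 - m) * x))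
        < b * p * (1 - m) ^ 2 * ys / (1 + b * (1 - m) * xs) :=
      div_lt_div_of_pos_left (by positivity) hA hAx1
    rw [hc_def]; linarith
  clear_value c
  have e1 : r1 * (1 - x / k1)
      = p * (1 - m) * ys / (1 + b * (1 - m) * xs) - r1 / k1 * (x - xs) := by
    rw [← heq1]; field_simp; ring
  have e2 : r2 * (1 - y / k2)
      = -(e * p * (1 - m) * xs / (1 + b * (1 - m) * xs)) - r2 / k2 * (y - ys) := by
    rw [← heq2]; field_simp; ring
  have key : e * (x - xs) * (r1 * (1 - x / k1) - p * (1 - m) * y / (1 + b * (1 - m) * x))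
        + (1 + b * (1 - m) * xs) * (y - ys) *
            (r2 * (1 - y / k2) + e * p * (1 - m) * x / (1 + b * (1 - m) * x))
      = -(e * c * (x - xs) ^ 2
          + (1 + b * (1 - m) * xs) * (r2 / k2) * (y - ys) ^ 2) := by
    rw [e1, e2, hc_def]
    field_simp
    ring
  have hec : 0 < e * c := mul_pos he hc
  have hd : 0 < (1 + b * (1 - m) * xs) * (r2 / k2) := by positivity
  have ht1 : 0 ≤ e * c * (x - xs) ^ 2 := by positivity
  have ht2 : 0 ≤ (1 + b * (1 - m) * xs) * (r2 / k2) * (y - ys) ^ 2 := by positivity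
  constructor
  · rw [key]; linarith
  · rw [key]
    constructor
    · intro h0
      have hT1 : e * c * (x - xs) ^ 2 = 0 := by linarith
      have hT2 : (1 + b * (1 - m) * xs) * (r2 / k2) * (y - ys) ^ 2 = 0 := by linarith
      have hx2 : (x - xs) ^ 2 = 0 := (mul_eq_zero.mp hT1).resolve_left hec.ne'
      have hy2 : (y - ys) ^ 2 = 0 := (mul_eq_zero.mp hT2).resolve_left hd.ne'
      constructor
      · have := pow_eq_zero_iff (n := 2) (by norm_num) |>.mp hx2
        linarith [sub_eq_zero.mp this]
      · have := pow_eq_zero_iff (n := 2) (by norm_num) |>.mp hy2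
        linarith [sub_eq_zero.mp this]
    · rintro ⟨rfl, rfl⟩
      ring
end

section
/- Let r1, k1, r2, k2, p, b, q1, q2, E, e > 0 and m ∈ (0,1), and let (x*, y*) with x*, y* > 0 satisfy r1·(1−x*/k1) − p·(1−m)·y*/(1+b·(1−m)·x*) = q1·E and r2·(1−y*/k2) + e·p·(1−m)·x*/(1+b·(1−m)·x*) = q2·E (i.e. (x*,y*) is an interior equilibrium of the harvesting subsystem II). Then for all x > 0 and y > 0: e·(x − x*)·(r1·(1−x/k1) − p·(1−m)·y/(1+b·(1−m)·x) − q1·E) + (1+b·(1−m)·x*)·(y − y*)·(r2·(1−y/k2) + e·p·(1−m)·x/(1+b·(1−m)·x) − q2·E) = −e·(r1/k1 − b·p·(1−m)²·y*/((1+b·(1−m)·x*)·(1+b·(1−m)·x)))·(x − x*)² − (r2/k2)·(1+b·(1−m)·x*)·(y − y*)². In particular, if r1/k1 > b·p·(1−m)²·y*/(1+b·(1−m)·x*), this quantity is ≤ 0 for all x, y > 0. -/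
/-- Lyapunov derivative identity for the harvesting subsystem II, and its
negative semi-definiteness under the stability condition. -/
theorem stmt_10 (r1 k1 r2 k2 p b q1 q2 E e m xs ys : ℝ)
    (hr1 : 0 < r1) (hk1 : 0 < k1) (hr2 : 0 < r2) (hk2 : 0 < k2)
    (hp : 0 < p) (hb : 0 < b) (hq1 : 0 < q1) (hq2 : 0 < q2)
    (hE : 0 < E) (he : 0 < e) (hm : m ∈ Set.Ioo (0 : ℝ) 1)
    (hxs : 0 < xs) (hys : 0 < ys)
    (heq1 : r1 * (1 - xs / k1) - p * (1 - m) * ys / (1 + b * (1 - m) * xs) = q1 * E)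
    (heq2 : r2 * (1 - ys / k2) + e * p * (1 - m) * xs / (1 + b * (1 - m) * xs) = q2 * E) :
    (∀ x y : ℝ, 0 < x → 0 < y →
      e * (x - xs) *
          (r1 * (1 - x / k1) - p * (1 - m) * y / (1 + b * (1 - m) * x) - q1 * E)
        + (1 + b * (1 - m) * xs) * (y - ys) *
            (r2 * (1 - y / k2) + e * p * (1 - m) * x / (1 + b * (1 - m) * x) - q2 * E)
      = -(e * (r1 / k1 - b * p * (1 - m) ^ 2 * ys /
            ((1 + b * (1 - m) * xs) * (1 + b * (1 - m) * x))) * (x - xs) ^ 2)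
        - r2 / k2 * (1 + b * (1 - m) * xs) * (y - ys) ^ 2)
    ∧ (r1 / k1 > b * p * (1 - m) ^ 2 * ys / (1 + b * (1 - m) * xs) →
      ∀ x y : ℝ, 0 < x → 0 < y →
        e * (x - xs) *
            (r1 * (1 - x / k1) - p * (1 - m) * y / (1 + b * (1 - m) * x) - q1 * E)
          + (1 + b * (1 - m) * xs) * (y - ys) *
              (r2 * (1 - y / k2) + e * p * (1 - m) * x / (1 + b * (1 - m) * x) - q2 * E)
        ≤ 0) := by
  obtain ⟨hm0, hm1⟩ := hm
  have hm' : 0 < 1 - m := by linarith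
  have hds : (0:ℝ) < 1 + b * (1 - m) * xs := by positivity
  have key : ∀ x y : ℝ, 0 < x → 0 < y →
      e * (x - xs) *
          (r1 * (1 - x / k1) - p * (1 - m) * y / (1 + b * (1 - m) * x) - q1 * E)
        + (1 + b * (1 - m) * xs) * (y - ys) *
            (r2 * (1 - y / k2) + e * p * (1 - m) * x / (1 + b * (1 - m) * x) - q2 * E)
      = -(e * (r1 / k1 - b * p * (1 - m) ^ 2 * ys /
            ((1 + b * (1 - m) * xs) * (1 + b * (1 - m) * x))) * (x - xs) ^ 2)
        - r2 / k2 * (1 + b * (1 - m) * xs) * (y - ys) ^ 2 := by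
    intro x y hx hy
    have hd : (0:ℝ) < 1 + b * (1 - m) * x := by positivity
    rw [← heq1, ← heq2]
    field_simp
    ring
  refine ⟨key, fun hcond x y hx hy => ?_⟩
  rw [key x y hx hy]
  have hd : (0:ℝ) < 1 + b * (1 - m) * x := by positivity
  have h1 : b * p * (1 - m) ^ 2 * ys /
      ((1 + b * (1 - m) * xs) * (1 + b * (1 - m) * x)) ≤
      b * p * (1 - m) ^ 2 * ys / (1 + b * (1 - m) * xs) := by
    rw [div_le_div_iff₀ (by positivity) hds]
    have hnum : (0:ℝ) ≤ b * p * (1 - m) ^ 2 * ys := by positivity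
    nlinarith [mul_nonneg hnum (mul_nonneg hds.le (mul_pos (mul_pos hb hm') hx).le)]
  have hA : 0 ≤ r1 / k1 - b * p * (1 - m) ^ 2 * ys /
      ((1 + b * (1 - m) * xs) * (1 + b * (1 - m) * x)) := by linarith
  have t1 : 0 ≤ e * (r1 / k1 - b * p * (1 - m) ^ 2 * ys /
      ((1 + b * (1 - m) * xs) * (1 + b * (1 - m) * x))) * (x - xs) ^ 2 := by positivity
  have t2 : 0 ≤ r2 / k2 * (1 + b * (1 - m) * xs) * (y - ys) ^ 2 := by positivity
  linarith
end

section
/- Let r1, k1, r2, k2, p, b, q1, q2, E, e > 0, m ∈ (0,1), and S > 0. Define y1 = (q2·k2·r1·(k1−S)·(1+b·(1−m)·S) − q1·k1·k2·(r2 + (r2·b + e·p)·(1−m)·S)) / (q2·k1·k2·p·(1−m) − q1·k1·r2·(1+b·(1−m)·S)), assuming the denominator is nonzero. Write F1(S,y1) and F2(S,y1) for the values of the non-harvesting and harvesting vector fields at (S, y1), and set λ = (first component of F2(S,y1)) / (first component of F2(S,y1) − first component of F1(S,y1)), assuming this denominator is nonzero (it equals −q1·E·S ≠ 0). Then λ·F1(S,y1)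 + (1−λ)·F2(S,y1) = (0, 0). -/
/-!
Since `F2 = F1 - E • (q1 S, q2 y)`, every convex combination `λ F1 + (1 - λ) F2` equals
`F1 - (1 - λ) E • (q1 S, q2 y)`. Choosing `λ` to kill the `x`-component, the combination vanishes
exactly when `F1(S, y)` is parallel to `(q1 S, q2 y)`, i.e. when `q1 S F1y = q2 y F1x`.
After dividing by `y`, this condition is linear in `y`, and `y1` is its solution.
-/

theorem filippov_combination_eq_zero_of_parallel {K : Type*} [Field K] {F1x F1y F2x F2y u v : K}
    (hF2x : F2x = F1x - u) (hF2y : F2y = F1y - v) (hu : u ≠ 0) (hpar : u * F1y = v * F1x) :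
    F2x / (F2x - F1x) * F1x + (1 - F2x / (F2x - F1x)) * F2x = 0 ∧
      F2x / (F2x - F1x) * F1y + (1 - F2x / (F2x - F1x)) * F2y = 0 := by
  subst hF2x hF2y
  rw [sub_sub_cancel_left]
  constructor
  · field_simp
    ring
  · field_simp
    linear_combination hpar

theorem harvest_direction_parallel_nonHarvesting_field (r1 k1 r2 k2 p b q1 q2 e m S : ℝ)
    (hk1 : k1 ≠ 0) (hk2 : k2 ≠ 0) (hD : 1 + b * (1 - m) * S ≠ 0)
    (hden : q2 * k1 * k2 * p * (1 - m) - q1 * k1 * r2 * (1 + b * (1 - m) * S) ≠ 0) (y1 : ℝ)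
    (hy1 : y1 = (q2 * k2 * r1 * (k1 - S) * (1 + b * (1 - m) * S)
            - q1 * k1 * k2 * (r2 + (r2 * b + e * p) * (1 - m) * S))
          / (q2 * k1 * k2 * p * (1 - m) - q1 * k1 * r2 * (1 + b * (1 - m) * S))) :
    q1 * S * (r2 * y1 * (1 - y1 / k2) + e * p * (1 - m) * S * y1 / (1 + b * (1 - m) * S)) =
      q2 * y1 * (r1 * S * (1 - S / k1) - p * (1 - m) * S * y1 / (1 + b * (1 - m) * S)) := by
  have hy : y1 * (q2 * k1 * k2 * p * (1 - m) - q1 * k1 * r2 * (1 + b * (1 - m) * S)) =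
      q2 * k2 * r1 * (k1 - S) * (1 + b * (1 - m) * S)
        - q1 * k1 * k2 * (r2 + (r2 * b + e * p) * (1 - m) * S) := by
    rw [hy1, div_mul_cancel₀ _ hden]
  set D := 1 + b * (1 - m) * S
  field_simp
  linear_combination (S * y1) * hy

theorem stmt_12_general (r1 k1 r2 k2 p b q1 q2 E e m S : ℝ)
    (hk1 : 0 < k1) (hk2 : 0 < k2) (hb : 0 < b) (hm : m ∈ Set.Ioo (0 : ℝ) 1) (hS : 0 < S)
    (hden : q2 * k1 * k2 * p * (1 - m) - q1 * k1 * r2 * (1 + b * (1 - m) * S) ≠ 0)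
    (y1 : ℝ)
    (hy1 : y1 = (q2 * k2 * r1 * (k1 - S) * (1 + b * (1 - m) * S)
            - q1 * k1 * k2 * (r2 + (r2 * b + e * p) * (1 - m) * S))
          / (q2 * k1 * k2 * p * (1 - m) - q1 * k1 * r2 * (1 + b * (1 - m) * S)))
    (F1x F1y F2x F2y : ℝ)
    (hF1x : F1x = r1 * S * (1 - S / k1) - p * (1 - m) * S * y1 / (1 + b * (1 - m) * S))
    (hF1y : F1y = r2 * y1 * (1 - y1 / k2) + e * p * (1 - m) * S * y1 / (1 + b * (1 - m) * S))
    (hF2x : F2x = F1x - q1 * E * S)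
    (hF2y : F2y = F1y - q2 * E * y1)
    (hdiff : F2x - F1x ≠ 0)
    (lam : ℝ) (hlam : lam = F2x / (F2x - F1x)) :
    lam * F1x + (1 - lam) * F2x = 0 ∧ lam * F1y + (1 - lam) * F2y = 0 := by
  have hD : 1 + b * (1 - m) * S ≠ 0 := by
    have : 0 < 1 - m := sub_pos.2 hm.2
    positivity
  have hu : q1 * E * S ≠ 0 := by
    rwa [hF2x, sub_sub_cancel_left, neg_ne_zero] at hdiff
  have hpar : q1 * E * S * F1y = q2 * E * y1 * F1x := by
    rw [hF1x, hF1y]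
    linear_combination E * harvest_direction_parallel_nonHarvesting_field r1 k1 r2 k2 p b q1 q2 e
      m S hk1.ne' hk2.ne' hD hden y1 hy1
  subst hlam
  exact filippov_combination_eq_zero_of_parallel hF2x hF2y hu hpar

/-- The pseudo-equilibrium: at the point `(S, y1)` on the switching line, the
Filippov convex combination `λ • F1 + (1-λ) • F2` vanishes, where `λ` is
determined by the vanishing of the `x`-component. -/
theorem stmt_12 (r1 k1 r2 k2 p b q1 q2 E e m S : ℝ)
    (hr1 : 0 < r1) (hk1 : 0 < k1) (hr2 : 0 < r2) (hk2 : 0 < k2)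
    (hp : 0 < p) (hb : 0 < b) (hq1 : 0 < q1) (hq2 : 0 < q2)
    (hE : 0 < E) (he : 0 < e) (hm : m ∈ Set.Ioo (0 : ℝ) 1) (hS : 0 < S)
    (hden : q2 * k1 * k2 * p * (1 - m) - q1 * k1 * r2 * (1 + b * (1 - m) * S) ≠ 0)
    (y1 : ℝ)
    (hy1 : y1 = (q2 * k2 * r1 * (k1 - S) * (1 + b * (1 - m) * S)
            - q1 * k1 * k2 * (r2 + (r2 * b + e * p) * (1 - m) * S))
          / (q2 * k1 * k2 * p * (1 - m) - q1 * k1 * r2 * (1 + b * (1 - m) * S)))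
    (F1x F1y F2x F2y : ℝ)
    (hF1x : F1x = r1 * S * (1 - S / k1) - p * (1 - m) * S * y1 / (1 + b * (1 - m) * S))
    (hF1y : F1y = r2 * y1 * (1 - y1 / k2) + e * p * (1 - m) * S * y1 / (1 + b * (1 - m) * S))
    (hF2x : F2x = F1x - q1 * E * S)
    (hF2y : F2y = F1y - q2 * E * y1)
    (hdiff : F2x - F1x ≠ 0)
    (lam : ℝ) (hlam : lam = F2x / (F2x - F1x)) :
    lam * F1x + (1 - lam) * F2x = 0 ∧ lam * F1y + (1 - lam) * F2y = 0 :=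
  stmt_12_general r1 k1 r2 k2 p b q1 q2 E e m S hk1 hk2 hb hm hS hden y1 hy1 F1x F1y F2x F2y hF1x
    hF1y hF2x hF2y hdiff lam hlam
end

section
/- Let r1, k1, r2, k2, p, b, e > 0 and m ∈ (0,1), let (x*, y*) with x*, y* > 0 satisfy r1·(1−x*/k1) = p·(1−m)·y*/(1+b·(1−m)·x*) and r2·(1−y*/k2) = −e·p·(1−m)·x*/(1+b·(1−m)·x*), and suppose r1/k1 > b·p·(1−m)²·y*/(1+b·(1−m)·x*). Let (x, y) : [0,∞) → ℝ² be a solution of the non-harvesting subsystem, i.e. x and y are differentiable with x(t), y(t) > 0, x'(t) = r1·x(t)·(1−x(t)/k1) − p·(1−m)·x(t)·y(t)/(1+b·(1−m)·x(t)) and y'(t) = r2·y(t)·(1−y(t)/k2) + e·p·(1−m)·x(t)·y(t)/(1+b·(1−m)·x(t)) for all t ≥ 0. Then (x(t), y(t)) → (x*, y*) as t → ∞. -/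
/-!
With the Volterra function `Φ_c(u) = u - c - c log (u / c)`, which is nonnegative and vanishes
only at `u = c`, put `V = e Φ_{x*}(x) + (1 + b(1-m)x*) Φ_{y*}(y)`. The weights are chosen so that
the mixed terms cancel in `V'`, leaving `V' ≤ -κ ((x - x*)² + (y - y*)²)` with `κ > 0` by the
hypothesis on `r1 / k1`. As `V` does not increase, `x` and `y` stay bounded away from `0`, where
`Φ_c(u) ≤ (u - c)² / u` makes `V` comparable to the squared distance to the equilibrium. Hence
`V' ≤ -λ V`, `V` decays exponentially, and `(√u - √c)² ≤ Φ_c(u)` turns this into convergence.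
-/

open Filter Real Topology Set

noncomputable def volterra (c x : ℝ) : ℝ := x - c - c * log (x / c)

section Volterra

variable {c x : ℝ}

lemma volterra_nonneg (hc : 0 < c) (hx : 0 < x) : 0 ≤ volterra c x := by
  have h : c * log (x / c) ≤ c * (x / c - 1) := by
    gcongr; exact log_le_sub_one_of_pos (by positivity)
  rw [mul_sub, mul_div_cancel₀ x hc.ne', mul_one] at h
  rw [volterra]; linarith

lemma volterra_le_sq_div (hc : 0 < c) (hx : 0 < x) : volterra c x ≤ (x - c) ^ 2 / x := by
  have h : c * (1 - (x / c)⁻¹) ≤ c * log (x / c) := by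
    gcongr; exact one_sub_inv_le_log_of_pos (by positivity)
  have hsq : (x - c) ^ 2 / x = x - c - c * (1 - (x / c)⁻¹) := by field_simp
  rw [volterra, hsq]; linarith

lemma mul_exp_le_of_volterra_le {M : ℝ} (hc : 0 < c) (hx : 0 < x) (h : volterra c x ≤ M) :
    c * exp (-((M + c) / c)) ≤ x := by
  have hlog : -((M + c) / c) ≤ log (x / c) := by
    rw [neg_le, le_div_iff₀ hc]; rw [volterra] at h; nlinarith
  rw [le_log_iff_exp_le (by positivity), le_div_iff₀ hc] at hlog
  linarith

lemma volterra_le_mul_sq_of_volterra_le {M : ℝ} (hc : 0 < c) (hx : 0 < x)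
    (h : volterra c x ≤ M) : volterra c x ≤ exp ((M + c) / c) / c * (x - c) ^ 2 := by
  calc volterra c x ≤ (x - c) ^ 2 / x := volterra_le_sq_div hc hx
    _ ≤ (x - c) ^ 2 / (c * exp (-((M + c) / c))) := by
      gcongr; exact mul_exp_le_of_volterra_le hc hx h
    _ = exp ((M + c) / c) / c * (x - c) ^ 2 := by
      rw [exp_neg]; field_simp

lemma sq_sqrt_sub_sqrt_le_volterra (hc : 0 < c) (hx : 0 < x) :
    (√x - √c) ^ 2 ≤ volterra c x := by
  have hlog : log (x / c) ≤ 2 * (√x / √c - 1) := by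
    have := log_le_sub_one_of_pos (sqrt_pos.2 (div_pos hx hc))
    rw [log_sqrt (div_pos hx hc).le, sqrt_div' _ hc.le] at this
    linarith
  have h : c * log (x / c) ≤ c * (2 * (√x / √c - 1)) := by gcongr
  have hc' : c = √c ^ 2 := (sq_sqrt hc.le).symm
  have hx' : x = √x ^ 2 := (sq_sqrt hx.le).symm
  rw [volterra]
  calc (√x - √c) ^ 2 = x - c - c * (2 * (√x / √c - 1)) := by
        field_simp
        linear_combination (2 * √x - √c) * hc' - √c * hx'
    _ ≤ x - c - c * log (x / c) := by linarith

lemma HasDerivAt.volterra {f : ℝ → ℝ} {f' t : ℝ} (hf : HasDerivAt f f' t) (hc : c ≠ 0)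
    (hft : f t ≠ 0) : HasDerivAt (fun s => volterra c (f s)) ((1 - c / f t) * f') t := by
  have hlog := ((hf.div_const c).log (div_ne_zero hft hc)).const_mul c
  rw [show (1 - c / f t) * f' = f' - c * (f' / c / (f t / c)) by field_simp]
  exact (hf.sub_const c).sub hlog

lemma tendsto_of_tendsto_volterra {ι : Type*} {l : Filter ι} {f : ι → ℝ} (hc : 0 < c)
    (hf : ∀ᶠ s in l, 0 < f s) (h : Tendsto (fun s => volterra c (f s)) l (𝓝 0)) :
    Tendsto f l (𝓝 c) := by
  have hsq : Tendsto (fun s => (√(f s) - √c) ^ 2) l (𝓝 0) :=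
    tendsto_of_tendsto_of_tendsto_of_le_of_le' tendsto_const_nhds h
      (Eventually.of_forall fun _ => sq_nonneg _)
      (hf.mono fun s hs => sq_sqrt_sub_sqrt_le_volterra hc hs)
  have hsqrt : Tendsto (fun s => √(f s)) l (𝓝 √c) := by
    rw [tendsto_iff_norm_sub_tendsto_zero]
    simpa [Function.comp_def, sqrt_sq_eq_abs] using (continuous_sqrt.tendsto 0).comp hsq
  have := hsqrt.pow 2
  rw [sq_sqrt hc.le] at this
  exact this.congr' (hf.mono fun s hs => sq_sqrt hs.le)

end Volterra

section Decay

variable {V V' : ℝ → ℝ} {μ : ℝ}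

lemma le_mul_exp_of_hasDerivAt_le_neg_mul (hV : ∀ t, 0 ≤ t → HasDerivAt V (V' t) t)
    (hV' : ∀ t, 0 ≤ t → V' t ≤ -μ * V t) {t : ℝ} (ht : 0 ≤ t) :
    V t ≤ V 0 * exp (-(μ * t)) := by
  have hU : ∀ s, 0 ≤ s → HasDerivAt (fun s => V s * exp (μ * s))
      (V' s * exp (μ * s) + V s * (exp (μ * s) * (μ * 1))) s :=
    fun s hs => (hV s hs).mul ((hasDerivAt_id s).const_mul μ).exp
  have hanti : AntitoneOn (fun s => V s * exp (μ * s)) (Ici 0) := by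
    refine antitoneOn_of_hasDerivWithinAt_nonpos (convex_Ici 0)
      (fun s hs => (hU s hs).continuousAt.continuousWithinAt)
      (fun s hs => (hU s (interior_subset hs)).hasDerivWithinAt) fun s hs => ?_
    have := hV' s (interior_subset hs)
    have := exp_pos (μ * s)
    nlinarith
  have h := hanti self_mem_Ici ht ht
  rw [exp_neg, ← div_eq_mul_inv, le_div_iff₀ (exp_pos _)]
  simpa using h

lemma tendsto_zero_of_hasDerivAt_le_neg_mul (hμ : 0 < μ)
    (hV : ∀ t, 0 ≤ t → HasDerivAt V (V' t) t) (hV' : ∀ t, 0 ≤ t → V' t ≤ -μ * V t)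
    (hV₀ : ∀ t, 0 ≤ t → 0 ≤ V t) : Tendsto V atTop (𝓝 0) := by
  have hexp : Tendsto (fun t => V 0 * exp (-(μ * t))) atTop (𝓝 0) := by
    simpa using (tendsto_exp_neg_atTop_nhds_zero.comp
      (tendsto_id.const_mul_atTop hμ)).const_mul (V 0)
  exact tendsto_of_tendsto_of_tendsto_of_le_of_le' tendsto_const_nhds hexp
    (eventually_ge_atTop 0 |>.mono hV₀)
    (eventually_ge_atTop 0 |>.mono fun t ht => le_mul_exp_of_hasDerivAt_le_neg_mul hV hV' ht)

end Decay

section VolterraLyapunov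

variable {α β c d : ℝ}

lemma add_volterra_le_mul_sq {u v M : ℝ} (hα : 0 < α) (hβ : 0 < β) (hc : 0 < c) (hd : 0 < d)
    (hu : 0 < u) (hv : 0 < v) (hM : α * volterra c u + β * volterra d v ≤ M) :
    α * volterra c u + β * volterra d v ≤
      max (α * (exp ((M / α + c) / c) / c)) (β * (exp ((M / β + d) / d) / d)) *
        ((u - c) ^ 2 + (v - d) ^ 2) := by
  have hu' : volterra c u ≤ M / α := by
    rw [le_div_iff₀' hα]; linarith [mul_nonneg hβ.le (volterra_nonneg hd hv)]
  have hv' : volterra d v ≤ M / β := by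
    rw [le_div_iff₀' hβ]; linarith [mul_nonneg hα.le (volterra_nonneg hc hu)]
  calc α * volterra c u + β * volterra d v
      ≤ α * (exp ((M / α + c) / c) / c * (u - c) ^ 2) +
          β * (exp ((M / β + d) / d) / d * (v - d) ^ 2) := by
        gcongr
        · exact volterra_le_mul_sq_of_volterra_le hc hu hu'
        · exact volterra_le_mul_sq_of_volterra_le hd hv hv'
    _ ≤ _ := by
        rw [mul_add, ← mul_assoc, ← mul_assoc]
        gcongr
        exacts [le_max_left _ _, le_max_right _ _]

lemma tendsto_of_tendsto_add_volterra {ι : Type*} {l : Filter ι} {x y : ι → ℝ} (hα : 0 < α)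
    (hβ : 0 < β) (hc : 0 < c) (hd : 0 < d) (hx : ∀ᶠ t in l, 0 < x t) (hy : ∀ᶠ t in l, 0 < y t)
    (h : Tendsto (fun t => α * volterra c (x t) + β * volterra d (y t)) l (𝓝 0)) :
    Tendsto (fun t => (x t, y t)) l (𝓝 (c, d)) := by
  refine (tendsto_of_tendsto_volterra hc hx ?_).prodMk_nhds (tendsto_of_tendsto_volterra hd hy ?_)
  · refine tendsto_of_tendsto_of_tendsto_of_le_of_le' tendsto_const_nhds
      (by simpa using h.div_const α) (hx.mono fun t ht => volterra_nonneg hc ht) ?_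
    filter_upwards [hx, hy] with t hxt hyt
    rw [le_div_iff₀' hα]
    linarith [mul_nonneg hβ.le (volterra_nonneg hd hyt)]
  · refine tendsto_of_tendsto_of_tendsto_of_le_of_le' tendsto_const_nhds
      (by simpa using h.div_const β) (hy.mono fun t ht => volterra_nonneg hd ht) ?_
    filter_upwards [hx, hy] with t hxt hyt
    rw [le_div_iff₀' hβ]
    linarith [mul_nonneg hα.le (volterra_nonneg hc hxt)]

theorem tendsto_of_volterra_lyapunov {x y x' y' : ℝ → ℝ} {κ : ℝ}
    (hα : 0 < α) (hβ : 0 < β) (hc : 0 < c) (hd : 0 < d) (hκ : 0 < κ)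
    (hdx : ∀ t, 0 ≤ t → HasDerivAt x (x' t) t) (hdy : ∀ t, 0 ≤ t → HasDerivAt y (y' t) t)
    (hx : ∀ t, 0 ≤ t → 0 < x t) (hy : ∀ t, 0 ≤ t → 0 < y t)
    (hV' : ∀ t, 0 ≤ t → α * ((1 - c / x t) * x' t) + β * ((1 - d / y t) * y' t) ≤
      -κ * ((x t - c) ^ 2 + (y t - d) ^ 2)) :
    Tendsto (fun t => (x t, y t)) atTop (𝓝 (c, d)) := by
  set V := fun t => α * volterra c (x t) + β * volterra d (y t)
  have hV : ∀ t, 0 ≤ t →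
      HasDerivAt V (α * ((1 - c / x t) * x' t) + β * ((1 - d / y t) * y' t)) t :=
    fun t ht => (((hdx t ht).volterra hc.ne' (hx t ht).ne').const_mul α).add
      (((hdy t ht).volterra hd.ne' (hy t ht).ne').const_mul β)
  have hV₀ : ∀ t, 0 ≤ t → 0 ≤ V t := fun t ht =>
    add_nonneg (mul_nonneg hα.le (volterra_nonneg hc (hx t ht)))
      (mul_nonneg hβ.le (volterra_nonneg hd (hy t ht)))
  have hVle : ∀ t, 0 ≤ t → V t ≤ V 0 := fun t ht => by
    simpa using le_mul_exp_of_hasDerivAt_le_neg_mul (μ := 0) hV (fun s hs => by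
      nlinarith [hV' s hs, sq_nonneg (x s - c), sq_nonneg (y s - d)]) ht
  set C := max (α * (exp ((V 0 / α + c) / c) / c)) (β * (exp ((V 0 / β + d) / d) / d))
  have hC : 0 < C := lt_max_of_lt_left (by positivity)
  have hVlim : Tendsto V atTop (𝓝 0) := by
    refine tendsto_zero_of_hasDerivAt_le_neg_mul (div_pos hκ hC) hV (fun t ht => ?_) hV₀
    calc _ ≤ -κ * ((x t - c) ^ 2 + (y t - d) ^ 2) := hV' t ht
      _ = -(κ / C) * (C * ((x t - c) ^ 2 + (y t - d) ^ 2)) := by field_simp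
      _ ≤ -(κ / C) * V t := by
        rw [neg_mul, neg_mul, neg_le_neg_iff]
        gcongr
        exact add_volterra_le_mul_sq hα hβ hc hd (hx t ht) (hy t ht) (hVle t ht)
  exact tendsto_of_tendsto_add_volterra hα hβ hc hd (eventually_ge_atTop 0 |>.mono hx)
    (eventually_ge_atTop 0 |>.mono hy) hVlim

end VolterraLyapunov

section HollingII

variable {r1 k1 r2 k2 P B e xs ys X Y : ℝ}

theorem hollingII_lyapunov_deriv_eq (hk1 : k1 ≠ 0) (hk2 : k2 ≠ 0) (hX : X ≠ 0) (hY : Y ≠ 0)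
    (hK : 1 + B * xs ≠ 0) (hD : 1 + B * X ≠ 0)
    (heq1 : r1 * (1 - xs / k1) = P * ys / (1 + B * xs))
    (heq2 : r2 * (1 - ys / k2) = -(e * P * xs / (1 + B * xs))) :
    e * ((1 - xs / X) * (r1 * X * (1 - X / k1) - P * X * Y / (1 + B * X))) +
        (1 + B * xs) * ((1 - ys / Y) * (r2 * Y * (1 - Y / k2) + e * P * X * Y / (1 + B * X))) =
      -(e * (r1 / k1 - P * B * ys / ((1 + B * X) * (1 + B * xs)))) * (X - xs) ^ 2 -
        (1 + B * xs) * r2 / k2 * (Y - ys) ^ 2 := by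
  -- `field_simp` looks for the denominators in its normal form `1 + xs * B`
  rw [mul_comm] at hK hD
  linear_combination (norm := skip) e * (X - xs) * heq1 + (1 + B * xs) * (Y - ys) * heq2
  field_simp
  ring

theorem hollingII_lyapunov_deriv_le {κ : ℝ} (hk1 : 0 < k1) (hk2 : 0 < k2) (hX : 0 < X) (hY : 0 < Y)
    (hxs : 0 ≤ xs) (hB : 0 ≤ B) (he : 0 ≤ e) (hPB : 0 ≤ P * B * ys)
    (heq1 : r1 * (1 - xs / k1) = P * ys / (1 + B * xs))
    (heq2 : r2 * (1 - ys / k2) = -(e * P * xs / (1 + B * xs)))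
    (hκx : κ ≤ e * (r1 / k1 - P * B * ys / (1 + B * xs))) (hκy : κ ≤ (1 + B * xs) * r2 / k2) :
    e * ((1 - xs / X) * (r1 * X * (1 - X / k1) - P * X * Y / (1 + B * X))) +
        (1 + B * xs) * ((1 - ys / Y) * (r2 * Y * (1 - Y / k2) + e * P * X * Y / (1 + B * X))) ≤
      -κ * ((X - xs) ^ 2 + (Y - ys) ^ 2) := by
  have hK : 0 < 1 + B * xs := by positivity
  have hD : 1 ≤ 1 + B * X := le_add_of_nonneg_right (by positivity)
  rw [hollingII_lyapunov_deriv_eq hk1.ne' hk2.ne' hX.ne' hY.ne' hK.ne' (by positivity) heq1 heq2]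
  have hκx' : κ ≤ e * (r1 / k1 - P * B * ys / ((1 + B * X) * (1 + B * xs))) :=
    hκx.trans (by gcongr; exact le_mul_of_one_le_left hK.le hD)
  nlinarith [mul_le_mul_of_nonneg_right hκx' (sq_nonneg (X - xs)),
    mul_le_mul_of_nonneg_right hκy (sq_nonneg (Y - ys))]

end HollingII

theorem stmt_17_general (r1 k1 r2 k2 p b e m xs ys : ℝ)
    (hk1 : 0 < k1) (hr2 : 0 < r2) (hk2 : 0 < k2)
    (hp : 0 < p) (hb : 0 < b) (he : 0 < e) (hm : m ∈ Set.Ioo (0 : ℝ) 1)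
    (hxs : 0 < xs) (hys : 0 < ys)
    (heq1 : r1 * (1 - xs / k1) = p * (1 - m) * ys / (1 + b * (1 - m) * xs))
    (heq2 : r2 * (1 - ys / k2) = -(e * p * (1 - m) * xs / (1 + b * (1 - m) * xs)))
    (hcond : r1 / k1 > b * p * (1 - m) ^ 2 * ys / (1 + b * (1 - m) * xs))
    (x y x' y' : ℝ → ℝ)
    (hdx : ∀ t : ℝ, 0 ≤ t → HasDerivAt x (x' t) t)
    (hdy : ∀ t : ℝ, 0 ≤ t → HasDerivAt y (y' t) t)
    (hxpos : ∀ t : ℝ, 0 ≤ t → 0 < x t)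
    (hypos : ∀ t : ℝ, 0 ≤ t → 0 < y t)
    (hodex : ∀ t : ℝ, 0 ≤ t →
      x' t = r1 * x t * (1 - x t / k1)
        - p * (1 - m) * x t * y t / (1 + b * (1 - m) * x t))
    (hodey : ∀ t : ℝ, 0 ≤ t →
      y' t = r2 * y t * (1 - y t / k2)
        + e * p * (1 - m) * x t * y t / (1 + b * (1 - m) * x t)) :
    Tendsto (fun t : ℝ => (x t, y t)) atTop (nhds (xs, ys)) := by
  have h1m : 0 < 1 - m := sub_pos.2 hm.2
  have hK : 0 < 1 + b * (1 - m) * xs := by positivity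
  have hκ : 0 < min (e * (r1 / k1 - p * (1 - m) * (b * (1 - m)) * ys / (1 + b * (1 - m) * xs)))
      ((1 + b * (1 - m) * xs) * r2 / k2) :=
    lt_min (mul_pos he (sub_pos.2 (lt_of_eq_of_lt (by ring) hcond))) (by positivity)
  have heq2' : r2 * (1 - ys / k2) = -(e * (p * (1 - m)) * xs / (1 + b * (1 - m) * xs)) := by
    rw [heq2]; ring
  refine tendsto_of_volterra_lyapunov he hK hxs hys hκ hdx hdy hxpos hypos fun t ht => ?_
  have hy' : y' t = r2 * y t * (1 - y t / k2)
      + e * (p * (1 - m)) * x t * y t / (1 + b * (1 - m) * x t) := by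
    rw [hodey t ht]; ring
  rw [hodex t ht, hy']
  exact hollingII_lyapunov_deriv_le hk1 hk2 (hxpos t ht) (hypos t ht) hxs.le (by positivity)
    he.le (by positivity) heq1 heq2' (min_le_left _ _) (min_le_right _ _)

/-- Global asymptotic stability of the interior equilibrium of subsystem I
(Theorem 3.3): every positive solution of the non-harvesting subsystem
converges to `(xs, ys)`. -/
theorem stmt_17 (r1 k1 r2 k2 p b e m xs ys : ℝ)
    (hr1 : 0 < r1) (hk1 : 0 < k1) (hr2 : 0 < r2) (hk2 : 0 < k2)
    (hp : 0 < p) (hb : 0 < b) (he : 0 < e) (hm : m ∈ Set.Ioo (0 : ℝ) 1)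
    (hxs : 0 < xs) (hys : 0 < ys)
    (heq1 : r1 * (1 - xs / k1) = p * (1 - m) * ys / (1 + b * (1 - m) * xs))
    (heq2 : r2 * (1 - ys / k2) = -(e * p * (1 - m) * xs / (1 + b * (1 - m) * xs)))
    (hcond : r1 / k1 > b * p * (1 - m) ^ 2 * ys / (1 + b * (1 - m) * xs))
    (x y x' y' : ℝ → ℝ)
    (hdx : ∀ t : ℝ, 0 ≤ t → HasDerivAt x (x' t) t)
    (hdy : ∀ t : ℝ, 0 ≤ t → HasDerivAt y (y' t) t)
    (hxpos : ∀ t : ℝ, 0 ≤ t → 0 < x t)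
    (hypos : ∀ t : ℝ, 0 ≤ t → 0 < y t)
    (hodex : ∀ t : ℝ, 0 ≤ t →
      x' t = r1 * x t * (1 - x t / k1)
        - p * (1 - m) * x t * y t / (1 + b * (1 - m) * x t))
    (hodey : ∀ t : ℝ, 0 ≤ t →
      y' t = r2 * y t * (1 - y t / k2)
        + e * p * (1 - m) * x t * y t / (1 + b * (1 - m) * x t)) :
    Tendsto (fun t : ℝ => (x t, y t)) atTop (nhds (xs, ys)) :=
  stmt_17_general r1 k1 r2 k2 p b e m xs ys hk1 hr2 hk2 hp hb he hm hxs hys heq1 heq2 hcond x y x'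
    y' hdx hdy hxpos hypos hodex hodey
end
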